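/- Let u : [r₁, r₂] × S¹ → ℝ^N be a C^2 map into a submanifold M ⊂ ℝ^N (i.e., u(t,θ) ∈ M) that is harmonic, so that u_tt + u_θθ = Δu is normal to M at each point. Then the function t ↦ ∫_{S¹} (|u_t|² - |u_θ|²)(t, θ) dθ is constant in t. -/

import Mathlib

/-!
Write `e = ‖u_t‖² - ‖u_θ‖²` and `m = 2⟪u_t, u_θ⟫`. Differentiating and using the symmetry of
the mixed partials `u_tθ = u_θt` gives the pointwise identity `∂_t e + ∂_θ m = 2⟪Δu, u_t⟫`, whose
right-hand side vanishes since `u_t` is tangent to `M` while `Δu` is normal to it. Integrating in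
`θ` over a period kills `∂_θ m`, so `t ↦ ∫ e dθ` has zero derivative.
-/

open Real Set intervalIntegral RealInnerProductSpace Function

section Partials

variable {E : Type*} [NormedAddCommGroup E] [NormedSpace ℝ E] {f : ℝ × ℝ → E}

noncomputable def partialFst (f : ℝ × ℝ → E) (p : ℝ × ℝ) : E := fderiv ℝ f p (1, 0)

noncomputable def partialSnd (f : ℝ × ℝ → E) (p : ℝ × ℝ) : E := fderiv ℝ f p (0, 1)

theorem hasDerivAt_partialFst {t θ : ℝ} (hf : DifferentiableAt ℝ f (t, θ)) :
    HasDerivAt (fun s => f (s, θ)) (partialFst f (t, θ)) t :=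
  hf.hasFDerivAt.comp_hasDerivAt t ((hasDerivAt_id t).prodMk (hasDerivAt_const t θ))

theorem hasDerivAt_partialSnd {t θ : ℝ} (hf : DifferentiableAt ℝ f (t, θ)) :
    HasDerivAt (fun φ => f (t, φ)) (partialSnd f (t, θ)) θ :=
  hf.hasFDerivAt.comp_hasDerivAt θ ((hasDerivAt_const θ t).prodMk (hasDerivAt_id θ))

theorem contDiff_partialFst {m n : WithTop ℕ∞} (hf : ContDiff ℝ n f) (hmn : m + 1 ≤ n) :
    ContDiff ℝ m (partialFst f) :=
  (hf.fderiv_right hmn).clm_apply contDiff_const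

theorem contDiff_partialSnd {m n : WithTop ℕ∞} (hf : ContDiff ℝ n f) (hmn : m + 1 ≤ n) :
    ContDiff ℝ m (partialSnd f) :=
  (hf.fderiv_right hmn).clm_apply contDiff_const

theorem partialSnd_partialFst (hf : ContDiff ℝ 2 f) :
    partialSnd (partialFst f) = partialFst (partialSnd f) := by
  funext p
  have hf' : DifferentiableAt ℝ (fderiv ℝ f) p :=
    (hf.fderiv_right (m := 1) le_rfl).differentiable one_ne_zero p
  change fderiv ℝ (fun q => fderiv ℝ f q (1, 0)) p (0, 1) =
    fderiv ℝ (fun q => fderiv ℝ f q (0, 1)) p (1, 0)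
  simp only [fderiv_clm_apply hf' (differentiableAt_const _), fderiv_const_apply,
    ContinuousLinearMap.comp_zero, zero_add, ContinuousLinearMap.flip_apply]
  exact (hf.contDiffAt.isSymmSndFDerivAt (by simp)) _ _

theorem deriv_fst_slice (hf : Differentiable ℝ f) (θ : ℝ) :
    deriv (fun s => f (s, θ)) = fun t => partialFst f (t, θ) :=
  funext fun t => (hasDerivAt_partialFst (hf (t, θ))).deriv

theorem deriv_snd_slice (hf : Differentiable ℝ f) (t : ℝ) :
    deriv (fun φ => f (t, φ)) = fun θ => partialSnd f (t, θ) :=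
  funext fun θ => (hasDerivAt_partialSnd (hf (t, θ))).deriv

end Partials

section IntervalIntegral

variable {E : Type*} [NormedAddCommGroup E] [NormedSpace ℝ E]

theorem hasDerivAt_intervalIntegral_of_continuous {F F' : ℝ × ℝ → E} (hF : Continuous F)
    (hF' : Continuous F') (hderiv : ∀ t θ, HasDerivAt (fun s => F (s, θ)) (F' (t, θ)) t)
    (a b t₀ : ℝ) :
    HasDerivAt (fun t => ∫ θ in a..b, F (t, θ)) (∫ θ in a..b, F' (t₀, θ)) t₀ := by
  obtain ⟨C, hC⟩ := (isCompact_closedBall t₀ 1 |>.prod isCompact_uIcc)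
    |>.exists_bound_of_continuousOn hF'.continuousOn
  have hslice {G : ℝ × ℝ → E} (hG : Continuous G) (t : ℝ) : Continuous fun θ => G (t, θ) :=
    hG.comp (continuous_const.prodMk continuous_id)
  exact (hasDerivAt_integral_of_dominated_loc_of_deriv_le (bound := fun _ => C)
    (Metric.closedBall_mem_nhds t₀ one_pos)
    (.of_forall fun t => (hslice hF t).aestronglyMeasurable)
    ((hslice hF t₀).intervalIntegrable a b) (hslice hF' t₀).aestronglyMeasurable
    (.of_forall fun θ hθ t ht => hC (t, θ) ⟨ht, uIoc_subset_uIcc hθ⟩)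
    intervalIntegrable_const (.of_forall fun θ _ t _ => hderiv t θ)).2

theorem Function.Periodic.deriv {g : ℝ → E} {T : ℝ} (hg : Periodic g T) :
    Periodic (deriv g) T := by
  intro x
  rw [← deriv_comp_add_const, hg.funext]

theorem Function.Periodic.intervalIntegral_eq_zero_of_hasDerivAt [CompleteSpace E]
    {g g' : ℝ → E} {T : ℝ} (hg : Periodic g T) (hderiv : ∀ x, HasDerivAt g (g' x) x) {a : ℝ}
    (hint : IntervalIntegrable g' MeasureTheory.volume a (a + T)) :
    ∫ x in a..a + T, g' x = 0 := by
  rw [integral_eq_sub_of_hasDerivAt (fun x _ => hderiv x) hint, hg a, sub_self]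

theorem intervalIntegral_eq_of_partialFst_add_partialSnd_eq_zero [CompleteSpace E]
    {F G : ℝ × ℝ → E} {T : ℝ} (hF : ContDiff ℝ 1 F) (hG : ContDiff ℝ 1 G)
    (hper : ∀ t, Periodic (fun θ => G (t, θ)) T)
    (hdiv : ∀ p, partialFst F p + partialSnd G p = 0) (a t t' : ℝ) :
    ∫ θ in a..a + T, F (t, θ) = ∫ θ in a..a + T, F (t', θ) := by
  have hflux (t : ℝ) : ∫ θ in a..a + T, partialSnd G (t, θ) = 0 :=
    (hper t).intervalIntegral_eq_zero_of_hasDerivAt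
      (fun θ => hasDerivAt_partialSnd (hG.differentiable one_ne_zero _))
      (((contDiff_partialSnd (m := 0) hG (by simp)).continuous.comp
        (continuous_const.prodMk continuous_id)).intervalIntegrable _ _)
  have hderiv (t : ℝ) : HasDerivAt (fun t => ∫ θ in a..a + T, F (t, θ)) 0 t := by
    convert hasDerivAt_intervalIntegral_of_continuous hF.continuous
      (contDiff_partialFst (m := 0) hF (by simp)).continuous
      (fun t θ => hasDerivAt_partialFst (hF.differentiable one_ne_zero _)) a (a + T) t using 1
    simp_rw [eq_neg_of_add_eq_zero_left (hdiv _), intervalIntegral.integral_neg, hflux, neg_zero]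
  exact is_const_of_deriv_eq_zero (fun t => (hderiv t).differentiableAt)
    (fun t => (hderiv t).deriv) t t'

end IntervalIntegral

section Energy

variable {E : Type*} [NormedAddCommGroup E] [InnerProductSpace ℝ E] {f : ℝ × ℝ → E}

theorem partialFst_energy_add_partialSnd_momentum (hf : ContDiff ℝ 2 f) (p : ℝ × ℝ) :
    partialFst (fun q => ‖partialFst f q‖ ^ 2 - ‖partialSnd f q‖ ^ 2) p
      + partialSnd (fun q => 2 * ⟪partialFst f q, partialSnd f q⟫) p
      = 2 * ⟪partialFst (partialFst f) p + partialSnd (partialSnd f) p, partialFst f p⟫ := by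
  obtain ⟨t, θ⟩ := p
  have hf₁ : ContDiff ℝ 1 (partialFst f) := contDiff_partialFst hf le_rfl
  have hf₂ : ContDiff ℝ 1 (partialSnd f) := contDiff_partialSnd hf le_rfl
  have h₁ := hasDerivAt_partialFst (hf₁.differentiable one_ne_zero (t, θ))
  have h₂ := hasDerivAt_partialFst (hf₂.differentiable one_ne_zero (t, θ))
  have h₃ := hasDerivAt_partialSnd (hf₁.differentiable one_ne_zero (t, θ))
  have h₄ := hasDerivAt_partialSnd (hf₂.differentiable one_ne_zero (t, θ))
  have henergy := (hasDerivAt_partialFst (((hf₁.norm_sq ℝ).sub (hf₂.norm_sq ℝ)).differentiable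
    one_ne_zero (t, θ))).unique (h₁.norm_sq.sub h₂.norm_sq)
  have hmomentum := (hasDerivAt_partialSnd ((contDiff_const.mul (hf₁.inner ℝ hf₂)).differentiable
    one_ne_zero (t, θ))).unique ((h₃.inner ℝ h₄).const_mul 2)
  rw [henergy, hmomentum, partialSnd_partialFst hf, inner_add_left,
    real_inner_comm (partialFst f _) (partialFst (partialFst f) _),
    real_inner_comm (partialFst f _) (partialSnd (partialSnd f) _),
    real_inner_comm (partialSnd f _)]
  ring

end Energy

theorem stmt_10_general (N : ℕ) (r₁ r₂ : ℝ)
    (u : ℝ → ℝ → EuclideanSpace ℝ (Fin N))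
    (Tan : EuclideanSpace ℝ (Fin N) → Submodule ℝ (EuclideanSpace ℝ (Fin N)))
    (hu : ContDiff ℝ 2 (Function.uncurry u))
    (hper : ∀ t, Function.Periodic (u t) (2*π))
    (htan1 : ∀ t θ, deriv (fun s => u s θ) t ∈ Tan (u t θ))
    (hnormal : ∀ t θ, ∀ v ∈ Tan (u t θ),
      ⟪deriv (deriv (fun s => u s θ)) t + deriv (deriv (fun φ => u t φ)) θ, v⟫ = 0) :
    ∀ t ∈ Icc r₁ r₂, ∀ t' ∈ Icc r₁ r₂,
      (∫ θ in (0:ℝ)..(2*π),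
          (‖deriv (fun s => u s θ) t‖^2 - ‖deriv (fun φ => u t φ) θ‖^2)) =
      ∫ θ in (0:ℝ)..(2*π),
          (‖deriv (fun s => u s θ) t'‖^2 - ‖deriv (fun φ => u t' φ) θ‖^2) := by
  have hf₁ : ContDiff ℝ 1 (partialFst (uncurry u)) := contDiff_partialFst hu le_rfl
  have hf₂ : ContDiff ℝ 1 (partialSnd (uncurry u)) := contDiff_partialSnd hu le_rfl
  have hut (θ : ℝ) : deriv (fun s => u s θ) = fun t => partialFst (uncurry u) (t, θ) :=
    deriv_fst_slice (hu.differentiable two_ne_zero) θ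
  have huθ (t : ℝ) : deriv (fun φ => u t φ) = fun θ => partialSnd (uncurry u) (t, θ) :=
    deriv_snd_slice (hu.differentiable two_ne_zero) t
  have hharmonic (p : ℝ × ℝ) : ⟪partialFst (partialFst (uncurry u)) p +
      partialSnd (partialSnd (uncurry u)) p, partialFst (uncurry u) p⟫ = 0 := by
    obtain ⟨t, θ⟩ := p
    have h := hnormal t θ _ (htan1 t θ)
    rwa [hut, huθ, deriv_fst_slice (hf₁.differentiable one_ne_zero) θ,
      deriv_snd_slice (hf₂.differentiable one_ne_zero) t] at h
  have hmomentum_periodic (t : ℝ) : Periodic (fun θ => 2 * ⟪partialFst (uncurry u) (t, θ),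
      partialSnd (uncurry u) (t, θ)⟫) (2 * π) := by
    intro θ
    simp only [← congrFun (hut _) t, ← congrFun (huθ t), (hper t).deriv θ, fun s => hper s θ]
  intro t _ t' _
  simpa only [zero_add, hut, huθ] using intervalIntegral_eq_of_partialFst_add_partialSnd_eq_zero
    ((hf₁.norm_sq ℝ).sub (hf₂.norm_sq ℝ)) (contDiff_const.mul (hf₁.inner ℝ hf₂))
    hmomentum_periodic
    (fun p => by rw [partialFst_energy_add_partialSnd_momentum hu, hharmonic, mul_zero]) 0 t t'

/-- For a `C²` harmonic map `u(t,θ)` from a flat cylinder `[r₁,r₂] × S¹` into a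
submanifold `M ⊂ ℝᴺ` (with tangent spaces `Tan`), i.e. with `Δu = u_tt + u_θθ`
orthogonal to the tangent space of `M` at `u(t,θ)`, the Hopf-type quantity
`t ↦ ∫_{S¹} (|u_t|² - |u_θ|²) dθ` is constant in `t`. -/
theorem stmt_10 (N : ℕ) (r₁ r₂ : ℝ) (h12 : r₁ < r₂)
    (u : ℝ → ℝ → EuclideanSpace ℝ (Fin N))
    (M : Set (EuclideanSpace ℝ (Fin N)))
    (Tan : EuclideanSpace ℝ (Fin N) → Submodule ℝ (EuclideanSpace ℝ (Fin N)))
    (hu : ContDiff ℝ 2 (Function.uncurry u))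
    (hper : ∀ t, Function.Periodic (u t) (2*π))
    (hmem : ∀ t θ, u t θ ∈ M)
    (htan1 : ∀ t θ, deriv (fun s => u s θ) t ∈ Tan (u t θ))
    (htan2 : ∀ t θ, deriv (fun φ => u t φ) θ ∈ Tan (u t θ))
    (hnormal : ∀ t θ, ∀ v ∈ Tan (u t θ),
      ⟪deriv (deriv (fun s => u s θ)) t + deriv (deriv (fun φ => u t φ)) θ, v⟫ = 0) :
    ∀ t ∈ Icc r₁ r₂, ∀ t' ∈ Icc r₁ r₂,
      (∫ θ in (0:ℝ)..(2*π),
          (‖deriv (fun s => u s θ) t‖^2 - ‖deriv (fun φ => u t φ) θ‖^2)) =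
      ∫ θ in (0:ℝ)..(2*π),
          (‖deriv (fun s => u s θ) t'‖^2 - ‖deriv (fun φ => u t' φ) θ‖^2) :=
  stmt_10_general N r₁ r₂ u Tan hu hper htan1 hnormal
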